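/- arXiv:1909.01102 — 3 statements merged into one kernel-verified Lean document; each statement's English description precedes it below -/
import Mathlib

section
/- Let X and ∂X be Banach spaces, A_m : D(A_m) ⊆ X → X a linear operator, L ∈ L(X, ∂X), and B : D(B) ⊆ X → ∂X. Suppose the Dirichlet operator L₀ = (L restricted to ker A_m)⁻¹ : ∂X → ker A_m exists and is bounded, and define the Dirichlet-to-Neumann operator N φ := B L₀ φ on D(N) = {φ : L₀ φ ∈ D(B)}. Then for λ ∈ ℂ, λ is in the resolvent set of N if and only if the Robin operator R_λ := ((B − λL) restricted to ker A_m)⁻¹ exists as a bounded operator ∂X → X; and in that case R_λ = −L₀ ∘ R(λ, N), where R(λ,N) = (λ − N)⁻¹. -/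
open Complex Filter Topology Set
open scoped BigOperators

noncomputable section

/-- `R` is the (bounded) resolvent operator of the unbounded operator `A` with
domain `D` at the point `l`, i.e. `R = (l - A)⁻¹`. -/
def IsResolventOf {X : Type*} [NormedAddCommGroup X] [NormedSpace ℂ X]
    (D : Submodule ℂ X) (A : X →ₗ[ℂ] X) (l : ℂ) (R : X →L[ℂ] X) : Prop :=
  (∀ x, R x ∈ D) ∧ (∀ x, l • R x - A (R x) = x) ∧ ∀ f ∈ D, R (l • f - A f) = f

/-- `l` belongs to the resolvent set of the operator `A` with domain `D`. -/
def InResolventSet {X : Type*} [NormedAddCommGroup X] [NormedSpace ℂ X]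
    (D : Submodule ℂ X) (A : X →ₗ[ℂ] X) (l : ℂ) : Prop :=
  ∃ R, IsResolventOf D A l R

/-- The open sector of angle `α` around the positive real axis. -/
def Sector (α : ℝ) : Set ℂ := {z | z ≠ 0 ∧ |z.arg| < α}

/-- `T` is an analytic semigroup of angle `α ∈ (0, π/2]` whose generator is the
operator `A` with domain `D`. -/
structure IsAnalyticSemigroupOf {X : Type*} [NormedAddCommGroup X] [NormedSpace ℂ X]
    (D : Submodule ℂ X) (A : X →ₗ[ℂ] X) (α : ℝ) (T : ℂ → X →L[ℂ] X) : Prop where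
  angle_pos : 0 < α
  angle_le : α ≤ Real.pi / 2
  map_zero : T 0 = 1
  map_add : ∀ z ∈ Sector α, ∀ w ∈ Sector α, T (z + w) = (T z).comp (T w)
  strong_continuity : ∀ x : X, Tendsto (fun z => T z x) (nhdsWithin 0 (Sector α)) (nhds x)
  analytic : ∀ x : X, AnalyticOnNhd ℂ (fun z => T z x) (Sector α)
  mem_domain_iff : ∀ f : X, f ∈ D ↔ ∃ g : X,
    Tendsto (fun t : ℝ => (t : ℂ)⁻¹ • (T (t : ℂ) f - f)) (nhdsWithin 0 (Ioi 0)) (nhds g)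
  generator : ∀ f ∈ D,
    Tendsto (fun t : ℝ => (t : ℂ)⁻¹ • (T (t : ℂ) f - f)) (nhdsWithin 0 (Ioi 0)) (nhds (A f))

/-- The operator `A` with domain `D` generates an analytic semigroup of angle `α`. -/
def GeneratesAnalyticSG {X : Type*} [NormedAddCommGroup X] [NormedSpace ℂ X]
    (D : Submodule ℂ X) (A : X →ₗ[ℂ] X) (α : ℝ) : Prop :=
  ∃ T, IsAnalyticSemigroupOf D A α T

/-- The operator `A` with domain `D` generates a compact analytic semigroup of angle `α`. -/
def GeneratesCompactAnalyticSG {X : Type*} [NormedAddCommGroup X] [NormedSpace ℂ X]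
    (D : Submodule ℂ X) (A : X →ₗ[ℂ] X) (α : ℝ) : Prop :=
  ∃ T, IsAnalyticSemigroupOf D A α T ∧ ∀ z ∈ Sector α, IsCompactOperator ⇑(T z)

/-- `L0` is the abstract Dirichlet operator associated with `A_m` (with domain `DAm`)
and the trace operator `L`: for every boundary value `φ`, `L0 φ` is the unique
solution of the abstract Dirichlet problem `A_m f = 0`, `L f = φ`. -/
def IsDirichletOp {X Y : Type*} [NormedAddCommGroup X] [NormedSpace ℂ X]
    [NormedAddCommGroup Y] [NormedSpace ℂ Y]
    (DAm : Submodule ℂ X) (Am : X →ₗ[ℂ] X) (L : X →L[ℂ] Y) (L0 : Y →L[ℂ] X) : Prop :=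
  (∀ φ : Y, L0 φ ∈ DAm ∧ Am (L0 φ) = 0 ∧ L (L0 φ) = φ) ∧
  ∀ f ∈ DAm, Am f = 0 → f = L0 (L f)

/-- `R` is the abstract Robin operator associated with `(l, A_m, B)`: for every `ψ`,
`R ψ` is the unique solution of the abstract Robin problem
`A_m f = 0`, `B f - l • L f = ψ`. -/
def IsRobinOp {X Y : Type*} [NormedAddCommGroup X] [NormedSpace ℂ X]
    [NormedAddCommGroup Y] [NormedSpace ℂ Y]
    (DAm : Submodule ℂ X) (Am : X →ₗ[ℂ] X) (DB : Submodule ℂ X) (B : X →ₗ[ℂ] Y)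
    (L : X →L[ℂ] Y) (l : ℂ) (R : Y →L[ℂ] X) : Prop :=
  (∀ ψ : Y, R ψ ∈ DAm ∧ Am (R ψ) = 0 ∧ R ψ ∈ DB ∧ B (R ψ) - l • L (R ψ) = ψ) ∧
  ∀ f ∈ DAm, f ∈ DB → Am f = 0 → R (B f - l • L f) = f

/-- Lemma 2.3 of the paper. If the bounded Dirichlet operator `L0`
exists, then `l` belongs to the resolvent set of the Dirichlet-to-Neumann operator
`N = B ∘ L0` (with domain `{φ : L0 φ ∈ D(B)}`) if and only if the bounded Robin
operator `R_l` exists; and in that case `R_l = -L0 ∘ R(l, N)`. -/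
theorem dirichlet_to_neumann_resolvent_iff_robin
    {X Y : Type*} [NormedAddCommGroup X] [NormedSpace ℂ X] [CompleteSpace X]
    [NormedAddCommGroup Y] [NormedSpace ℂ Y] [CompleteSpace Y]
    (DAm : Submodule ℂ X) (Am : X →ₗ[ℂ] X) (L : X →L[ℂ] Y)
    (DB : Submodule ℂ X) (B : X →ₗ[ℂ] Y)
    (L0 : Y →L[ℂ] X) (hL0 : IsDirichletOp DAm Am L L0) (l : ℂ) :
    (InResolventSet (DB.comap (L0 : Y →ₗ[ℂ] X)) (B.comp (L0 : Y →ₗ[ℂ] X)) l ↔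
      ∃ R : Y →L[ℂ] X, IsRobinOp DAm Am DB B L l R) ∧
    ∀ (RN : Y →L[ℂ] Y) (R : Y →L[ℂ] X),
      IsResolventOf (DB.comap (L0 : Y →ₗ[ℂ] X)) (B.comp (L0 : Y →ₗ[ℂ] X)) l RN →
      IsRobinOp DAm Am DB B L l R → R = -(L0.comp RN) := by
  obtain ⟨hL0ex, hL0uniq⟩ := hL0
  constructor
  · constructor
    · rintro ⟨RN, hRNdom, hRNeq, hRNinv⟩
      refine ⟨-(L0.comp RN), ?_, ?_⟩
      · intro ψ
        obtain ⟨h1, h2, h3⟩ := hL0ex (RN ψ)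
        refine ⟨?_, ?_, ?_, ?_⟩
        · simpa using DAm.neg_mem h1
        · simp [h2]
        · simpa using DB.neg_mem (hRNdom ψ)
        · have heq := hRNeq ψ
          simp only [LinearMap.comp_apply, ContinuousLinearMap.coe_coe] at heq
          simp only [ContinuousLinearMap.comp_apply, ContinuousLinearMap.neg_apply,
            map_neg, smul_neg, h3]
          conv_rhs => rw [← heq]
          abel
      · intro f hfDAm hfDB hAmf
        have hf : f = L0 (L f) := hL0uniq f hfDAm hAmf
        have hmem : L f ∈ DB.comap (L0 : Y →ₗ[ℂ] X) := by
          simpa [Submodule.mem_comap, ← hf] using hfDB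
        have hinv := hRNinv (L f) hmem
        simp only [LinearMap.comp_apply, ContinuousLinearMap.coe_coe] at hinv
        have hBf : B f - l • L f = -(l • L f - B (L0 (L f))) := by
          rw [← hf]; abel
        rw [ContinuousLinearMap.neg_apply, ContinuousLinearMap.comp_apply,
          hBf, map_neg, hinv, map_neg, neg_neg, ← hf]
    · rintro ⟨R, hRex, hRuniq⟩
      refine ⟨-(L.comp R), ?_, ?_, ?_⟩
      · intro φ
        obtain ⟨h1, h2, h3, h4⟩ := hRex φ
        have hR : R φ = L0 (L (R φ)) := hL0uniq (R φ) h1 h2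
        simp only [Submodule.mem_comap, ContinuousLinearMap.comp_apply,
          ContinuousLinearMap.neg_apply, ContinuousLinearMap.coe_coe, map_neg, ← hR]
        exact DB.neg_mem h3
      · intro φ
        obtain ⟨h1, h2, h3, h4⟩ := hRex φ
        have hR : R φ = L0 (L (R φ)) := hL0uniq (R φ) h1 h2
        simp only [ContinuousLinearMap.comp_apply, ContinuousLinearMap.neg_apply,
          LinearMap.comp_apply, ContinuousLinearMap.coe_coe, map_neg, smul_neg, ← hR]
        conv_rhs => rw [← h4]
        abel
      · intro φ hφ
        simp only [Submodule.mem_comap, ContinuousLinearMap.coe_coe] at hφ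
        obtain ⟨h1, h2, h3⟩ := hL0ex φ
        have huniq := hRuniq (L0 φ) h1 hφ h2
        rw [h3] at huniq
        have : l • φ - (B.comp (L0 : Y →ₗ[ℂ] X)) φ = -(B (L0 φ) - l • φ) := by
          simp only [LinearMap.comp_apply, ContinuousLinearMap.coe_coe]; abel
        simp only [ContinuousLinearMap.comp_apply, ContinuousLinearMap.neg_apply, this,
          map_neg, huniq, h3, neg_neg]
  · intro RN R hRN hR
    obtain ⟨hRNdom, hRNeq, hRNinv⟩ := hRN
    obtain ⟨hRex, hRuniq⟩ := hR
    ext ψ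
    obtain ⟨h1, h2, h3, h4⟩ := hRex ψ
    have hRψ : R ψ = L0 (L (R ψ)) := hL0uniq (R ψ) h1 h2
    have hmem : L (R ψ) ∈ DB.comap (L0 : Y →ₗ[ℂ] X) := by
      simpa [Submodule.mem_comap, ← hRψ] using h3
    have hinv := hRNinv (L (R ψ)) hmem
    simp only [LinearMap.comp_apply, ContinuousLinearMap.coe_coe, ← hRψ] at hinv
    have key : l • L (R ψ) - B (R ψ) = -ψ := by
      conv_rhs => rw [← h4]
      abel
    rw [key, map_neg] at hinv
    have hRNψ : RN ψ = -(L (R ψ)) := by rw [← hinv, neg_neg]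
    simp only [ContinuousLinearMap.comp_apply, ContinuousLinearMap.neg_apply, hRNψ,
      map_neg, ← hRψ, neg_neg]
end
end

section
/- Let X and ∂X be Banach spaces, with operators A_m, L, B as in the abstract boundary setting, and suppose the bounded Dirichlet operator L₀ : ∂X → ker A_m exists with L ∘ L₀ = id on ∂X. If for some λ ∈ ℂ the Robin operator R_λ = ((B − λL)|_{ker A_m})⁻¹ : ∂X → ker A_m ∩ D(B) exists and is bounded, then for every ψ ∈ ∂X there is a unique φ ∈ D(N) with λφ − Nφ = ψ, and it is given by φ = −L R_λ ψ. -/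
open Complex Filter Topology Set
open scoped BigOperators

noncomputable section

/-- Suppose the bounded Dirichlet operator `L0` exists
(`L ∘ L0 = id`), and for some `l ∈ ℂ` the bounded Robin operator `R_l` exists. Then
for every `ψ ∈ ∂X` there is a unique `φ ∈ D(N)` with `l φ - N φ = ψ`, where
`N = B ∘ L0` is the Dirichlet-to-Neumann operator with domain `{φ : L0 φ ∈ D(B)}`;
moreover this solution is given by `φ = -L (R_l ψ)`. -/
theorem robin_gives_unique_solution_of_dtn_resolvent_equation
    {X Y : Type*} [NormedAddCommGroup X] [NormedSpace ℂ X] [CompleteSpace X]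
    [NormedAddCommGroup Y] [NormedSpace ℂ Y] [CompleteSpace Y]
    (DAm : Submodule ℂ X) (Am : X →ₗ[ℂ] X) (L : X →L[ℂ] Y)
    (DB : Submodule ℂ X) (B : X →ₗ[ℂ] Y)
    (L0 : Y →L[ℂ] X) (hL0 : IsDirichletOp DAm Am L L0)
    (l : ℂ) (R : Y →L[ℂ] X) (hR : IsRobinOp DAm Am DB B L l R) :
    ∀ ψ : Y,
      (L0 (-(L (R ψ))) ∈ DB ∧
        l • (-(L (R ψ))) - B (L0 (-(L (R ψ)))) = ψ) ∧
      ∀ φ : Y, L0 φ ∈ DB → l • φ - B (L0 φ) = ψ → φ = -(L (R ψ)) := by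
  intro ψ
  obtain ⟨hR1, hR2⟩ := hR
  obtain ⟨hL1, hL2⟩ := hL0
  obtain ⟨hRmem, hRAm, hRDB, hReq⟩ := hR1 ψ
  have hRrep : R ψ = L0 (L (R ψ)) := hL2 _ hRmem hRAm
  have hneg : L0 (-(L (R ψ))) = -(R ψ) := by
    rw [map_neg, ← hRrep]
  constructor
  · constructor
    · rw [hneg]; exact DB.neg_mem hRDB
    · rw [hneg, map_neg, smul_neg]
      linear_combination (norm := abel) hReq
  · intro φ hφDB hφeq
    have hLL : L (L0 φ) = φ := (hL1 φ).2.2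
    have hmem : -(L0 φ) ∈ DAm := DAm.neg_mem (hL1 φ).1
    have hmemB : -(L0 φ) ∈ DB := DB.neg_mem hφDB
    have hAm : Am (-(L0 φ)) = 0 := by rw [map_neg, (hL1 φ).2.1, neg_zero]
    have key : R (B (-(L0 φ)) - l • L (-(L0 φ))) = -(L0 φ) := hR2 _ hmem hmemB hAm
    have harg : B (-(L0 φ)) - l • L (-(L0 φ)) = ψ := by
      rw [map_neg, map_neg, smul_neg, sub_neg_eq_add, ← hφeq, hLL]; abel
    rw [harg] at key
    have : L (R ψ) = -φ := by rw [key, map_neg, hLL]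
    rw [this, neg_neg]
end
end

section
/- Let H and K be Hilbert spaces, T : H → K a bounded linear map, and let a(f,g) = ⟨Gf, Gg⟩_{K₁} + λ⟨Tf, Tg⟩_K be a sesquilinear form on H with Re λ > 0, where G : H → K₁ is bounded, H embeds compactly into a Hilbert space H₀, ‖f‖_H² ≤ C(‖Gf‖² + ‖f‖_{H₀}²), and Gf = 0 together with Tf = 0 implies f = 0. Then the form a is coercive: there exists c > 0 with Re a(f,f) ≥ c‖f‖_H² for all f ∈ H. -/
open Complex Filter Topology Set

noncomputable section

/-- coercivity of the Robin form, abstracting Lemma 3.2.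
Let `H, K, K₁, H₀` be Hilbert spaces, `G : H → K₁` ("gradient"), `T : H → K`
("trace") and `J : H → H₀` (compact embedding) bounded linear maps, and `l ∈ ℂ`
with `Re l > 0`. Assume `‖f‖² ≤ C (‖G f‖² + ‖J f‖²)`, and that `G f = 0` together
with `T f = 0` implies `f = 0`. Then the sesquilinear form
`a(f,g) = ⟪G f, G g⟫ + l ⟪T f, T g⟫` is coercive: there is `c > 0` with
`Re a(f,f) ≥ c ‖f‖²` for all `f ∈ H`. -/
theorem robin_form_coercive
    {H K K₁ H₀ : Type*}
    [NormedAddCommGroup H] [InnerProductSpace ℂ H] [CompleteSpace H]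
    [NormedAddCommGroup K] [InnerProductSpace ℂ K] [CompleteSpace K]
    [NormedAddCommGroup K₁] [InnerProductSpace ℂ K₁] [CompleteSpace K₁]
    [NormedAddCommGroup H₀] [InnerProductSpace ℂ H₀] [CompleteSpace H₀]
    (G : H →L[ℂ] K₁) (T : H →L[ℂ] K) (J : H →L[ℂ] H₀)
    (hJ : IsCompactOperator ⇑J)
    (C : ℝ) (hC : ∀ f : H, ‖f‖ ^ 2 ≤ C * (‖G f‖ ^ 2 + ‖J f‖ ^ 2))
    (huniq : ∀ f : H, G f = 0 → T f = 0 → f = 0)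
    (l : ℂ) (hl : 0 < l.re) :
    ∃ c > 0, ∀ f : H,
      c * ‖f‖ ^ 2 ≤
        ((inner ℂ (G f) (G f) : ℂ) + l * (inner ℂ (T f) (T f) : ℂ)).re := by
  classical
  by_contra hcon
  push_neg at hcon
  set Q : H → ℝ := fun f => ‖G f‖ ^ 2 + l.re * ‖T f‖ ^ 2 with hQdef
  have hQeq : ∀ f : H,
      ((inner ℂ (G f) (G f) : ℂ) + l * (inner ℂ (T f) (T f) : ℂ)).re = Q f := by
    intro f
    have h1 : (inner ℂ (G f) (G f) : ℂ).re = ‖G f‖ ^ 2 := by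
      rw [← RCLike.re_to_complex]; exact inner_self_eq_norm_sq _
    have h2 : (inner ℂ (T f) (T f) : ℂ).re = ‖T f‖ ^ 2 := by
      rw [← RCLike.re_to_complex]; exact inner_self_eq_norm_sq _
    have h3 : (inner ℂ (T f) (T f) : ℂ).im = 0 := by
      rw [← RCLike.im_to_complex]; exact inner_self_im _
    simp only [hQdef, Complex.add_re, Complex.mul_re, h1, h2, h3]
    ring
  -- construct a normalized sequence with Q (v n) < 1/(n+1)
  have hex : ∀ n : ℕ, ∃ v : H, ‖v‖ = 1 ∧ Q v < 1 / ((n : ℝ) + 1) := by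
    intro n
    obtain ⟨f, hf⟩ := hcon (1 / ((n : ℝ) + 1)) (by positivity)
    rw [hQeq] at hf
    have hf0 : f ≠ 0 := by
      rintro rfl
      simp [hQdef] at hf
    have hnorm : (0 : ℝ) < ‖f‖ := norm_pos_iff.mpr hf0
    refine ⟨((‖f‖⁻¹ : ℝ) : ℂ) • f, ?_, ?_⟩
    · have habs : ‖(((‖f‖⁻¹ : ℝ)) : ℂ)‖ = ‖f‖⁻¹ := by
        rw [_root_.Complex.norm_real, Real.norm_eq_abs,
          _root_.abs_of_nonneg (inv_nonneg.mpr hnorm.le)]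
      rw [norm_smul, habs, inv_mul_cancel₀ hnorm.ne']
    · have h1 : Q (((‖f‖⁻¹ : ℝ) : ℂ) • f) = ‖f‖⁻¹ ^ 2 * Q f := by
        have habs : ‖(((‖f‖⁻¹ : ℝ)) : ℂ)‖ = ‖f‖⁻¹ := by
          rw [_root_.Complex.norm_real, Real.norm_eq_abs,
            _root_.abs_of_nonneg (inv_nonneg.mpr hnorm.le)]
        simp only [hQdef, map_smul, norm_smul, habs, mul_pow]
        ring
      rw [h1]
      have h2 : ‖f‖⁻¹ ^ 2 * Q f < ‖f‖⁻¹ ^ 2 * (1 / ((n : ℝ) + 1) * ‖f‖ ^ 2) :=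
        mul_lt_mul_of_pos_left hf (by positivity)
      refine h2.trans_le (le_of_eq ?_)
      field_simp
  choose v hv1 hvQ using hex
  have hQnonneg : ∀ f : H, 0 ≤ Q f := fun f => by
    have := mul_nonneg hl.le (sq_nonneg ‖T f‖)
    positivity
  have hone : Tendsto (fun n : ℕ => 1 / ((n : ℝ) + 1)) atTop (𝓝 0) :=
    tendsto_one_div_add_atTop_nhds_zero_nat
  have sqrt_trick : ∀ u : ℕ → ℝ, (∀ n, 0 ≤ u n) →
      Tendsto (fun n => u n ^ 2) atTop (𝓝 0) → Tendsto u atTop (𝓝 0) := by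
    intro u hu h
    have h2 := (Real.continuous_sqrt.tendsto 0).comp h
    simpa [Function.comp_def, Real.sqrt_sq (hu _)] using h2
  -- G (v n) → 0 and T (v n) → 0
  have hG2 : Tendsto (fun n => ‖G (v n)‖ ^ 2) atTop (𝓝 0) := by
    refine squeeze_zero (fun n => sq_nonneg _) (fun n => ?_) hone
    have := hvQ n
    have h0 : 0 ≤ l.re * ‖T (v n)‖ ^ 2 := mul_nonneg hl.le (sq_nonneg _)
    simp only [hQdef] at this
    linarith
  have hT2 : Tendsto (fun n => ‖T (v n)‖ ^ 2) atTop (𝓝 0) := by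
    have hb : Tendsto (fun n : ℕ => (1 / ((n : ℝ) + 1)) / l.re) atTop (𝓝 0) := by
      simpa using hone.div_const l.re
    refine squeeze_zero (fun n => sq_nonneg _) (fun n => ?_) hb
    have h := hvQ n
    have h0 : 0 ≤ ‖G (v n)‖ ^ 2 := sq_nonneg _
    simp only [hQdef] at h
    rw [le_div_iff₀ hl]
    nlinarith
  have hGnorm : Tendsto (fun n => ‖G (v n)‖) atTop (𝓝 0) :=
    sqrt_trick _ (fun n => norm_nonneg _) hG2
  have hTnorm : Tendsto (fun n => ‖T (v n)‖) atTop (𝓝 0) :=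
    sqrt_trick _ (fun n => norm_nonneg _) hT2
  -- compactness of J: extract a subsequence along which J (v n) converges
  have hcomp : IsCompact (closure (⇑J '' Metric.closedBall 0 1)) :=
    IsCompactOperator.isCompact_closure_image_closedBall
      (𝕜₁ := ℂ) (f := (J : H →ₗ[ℂ] H₀)) hJ 1
  have hmem : ∀ n, J (v n) ∈ closure (⇑J '' Metric.closedBall 0 1) := fun n =>
    subset_closure ⟨v n, by simp [Metric.mem_closedBall, hv1 n], rfl⟩
  obtain ⟨y, -, φ, hφ, hJy⟩ := hcomp.tendsto_subseq hmem
  have hJcauchy : CauchySeq (fun n => J (v (φ n))) := hJy.cauchySeq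
  have hJdist : Tendsto
      (fun p : ℕ × ℕ => dist (J (v (φ p.1))) (J (v (φ p.2)))) atTop (𝓝 0) :=
    cauchySeq_iff_tendsto_dist_atTop_0.mp hJcauchy
  -- C is positive
  have hCpos : 0 < C := by
    have h1 := hC (v 0)
    rw [hv1 0] at h1
    nlinarith [sq_nonneg ‖G (v 0)‖, sq_nonneg ‖J (v 0)‖]
  -- the subsequence v ∘ φ is Cauchy in H
  have hGφ : Tendsto (fun n => ‖G (v (φ n))‖) atTop (𝓝 0) :=
    hGnorm.comp hφ.tendsto_atTop
  have hGp1 : Tendsto (fun p : ℕ × ℕ => ‖G (v (φ p.1))‖) atTop (𝓝 0) :=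
    hGφ.comp (by rw [← prod_atTop_atTop_eq]; exact tendsto_fst)
  have hGp2 : Tendsto (fun p : ℕ × ℕ => ‖G (v (φ p.2))‖) atTop (𝓝 0) :=
    hGφ.comp (by rw [← prod_atTop_atTop_eq]; exact tendsto_snd)
  have hrhs : Tendsto (fun p : ℕ × ℕ =>
      C * ((‖G (v (φ p.1))‖ + ‖G (v (φ p.2))‖) ^ 2
        + dist (J (v (φ p.1))) (J (v (φ p.2))) ^ 2)) atTop (𝓝 (C * ((0 + 0) ^ 2 + 0 ^ 2))) :=
    tendsto_const_nhds.mul (((hGp1.add hGp2).pow 2).add (hJdist.pow 2))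
  have hrhs0 : Tendsto (fun p : ℕ × ℕ =>
      C * ((‖G (v (φ p.1))‖ + ‖G (v (φ p.2))‖) ^ 2
        + dist (J (v (φ p.1))) (J (v (φ p.2))) ^ 2)) atTop (𝓝 0) := by
    simpa using hrhs
  have hbound : ∀ p : ℕ × ℕ, ‖v (φ p.1) - v (φ p.2)‖ ^ 2 ≤
      C * ((‖G (v (φ p.1))‖ + ‖G (v (φ p.2))‖) ^ 2
        + dist (J (v (φ p.1))) (J (v (φ p.2))) ^ 2) := by
    intro p
    have h := hC (v (φ p.1) - v (φ p.2))
    have hGd : ‖G (v (φ p.1) - v (φ p.2))‖ ≤ ‖G (v (φ p.1))‖ + ‖G (v (φ p.2))‖ := by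
      rw [map_sub]; exact norm_sub_le _ _
    have hJd : ‖J (v (φ p.1) - v (φ p.2))‖ = dist (J (v (φ p.1))) (J (v (φ p.2))) := by
      rw [map_sub, dist_eq_norm]
    refine h.trans ?_
    rw [← hJd]
    gcongr
  have hsq : Tendsto (fun p : ℕ × ℕ => ‖v (φ p.1) - v (φ p.2)‖ ^ 2) atTop (𝓝 0) :=
    squeeze_zero (fun p => sq_nonneg _) hbound hrhs0
  have hdiff : Tendsto (fun p : ℕ × ℕ => ‖v (φ p.1) - v (φ p.2)‖) atTop (𝓝 0) := by
    have h2 := (Real.continuous_sqrt.tendsto 0).comp hsq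
    simpa [Function.comp_def, Real.sqrt_sq (norm_nonneg _)] using h2
  have hcauchy : CauchySeq (fun n => v (φ n)) := by
    rw [cauchySeq_iff_tendsto_dist_atTop_0]
    simpa [dist_eq_norm] using hdiff
  obtain ⟨w, hw⟩ := cauchySeq_tendsto_of_complete hcauchy
  -- identify the limit
  have hwnorm : ‖w‖ = 1 := by
    have h1 : Tendsto (fun n => ‖v (φ n)‖) atTop (𝓝 ‖w‖) :=
      (continuous_norm.tendsto w).comp hw
    have h2 : Tendsto (fun n => ‖v (φ n)‖) atTop (𝓝 1) := by
      simp only [hv1]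
      exact tendsto_const_nhds
    exact tendsto_nhds_unique h1 h2
  have hGw : G w = 0 := by
    have h1 : Tendsto (fun n => G (v (φ n))) atTop (𝓝 (G w)) :=
      (G.continuous.tendsto w).comp hw
    have h2 : Tendsto (fun n => G (v (φ n))) atTop (𝓝 0) := by
      rw [tendsto_zero_iff_norm_tendsto_zero]
      exact hGφ
    exact tendsto_nhds_unique h1 h2
  have hTw : T w = 0 := by
    have h1 : Tendsto (fun n => T (v (φ n))) atTop (𝓝 (T w)) :=
      (T.continuous.tendsto w).comp hw
    have h2 : Tendsto (fun n => T (v (φ n))) atTop (𝓝 0) := by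
      rw [tendsto_zero_iff_norm_tendsto_zero]
      exact hTnorm.comp hφ.tendsto_atTop
    exact tendsto_nhds_unique h1 h2
  have : w = 0 := huniq w hGw hTw
  rw [this, norm_zero] at hwnorm
  exact one_ne_zero hwnorm.symm
end
end
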